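/- arXiv:1501.04945 — 3 statements merged into one kernel-verified Lean document; each statement's English description precedes it below -/
import Mathlib

section
/- For any 2×2 matrices A, B, C over a commutative ring, Σ_{π ∈ S_3} sgn(π) tr_π(A,B,C) = 0, where, writing (A_1, A_2, A_3) = (A, B, C), tr_π(A,B,C) = Π_{cycles (i_1...i_k) of π} tr(A_{i_1}···A_{i_k}). -/
/-- `trPerm π A` is the product over the cycles `(i₁ … i_k)` of `π` of
`tr(A_{i₁} ⋯ A_{i_k})`, expressed in partition-function (state-sum) form:
`Σ_{φ} Π_i (A i) (φ i) (φ (π i))`. -/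
def trPerm {R : Type*} [CommRing R] (π : Equiv.Perm (Fin 3))
    (A : Fin 3 → Matrix (Fin 2) (Fin 2) R) : R :=
  ∑ φ : Fin 3 → Fin 2, ∏ i : Fin 3, A i (φ i) (φ (π i))

private lemma inner_sum_zero {R : Type*} [CommRing R]
    (A : Fin 3 → Matrix (Fin 2) (Fin 2) R) (φ : Fin 3 → Fin 2)
    (i j : Fin 3) (hij : i ≠ j) (hφ : φ i = φ j) :
    ∑ π : Equiv.Perm (Fin 3),
      ((Equiv.Perm.sign π : ℤ) : R) * ∏ k : Fin 3, A k (φ k) (φ (π k)) = 0 := by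
  have hswap : ∀ x, φ (Equiv.swap i j x) = φ x := by
    intro x
    rcases eq_or_ne x i with rfl | hxi
    · rw [Equiv.swap_apply_left, hφ]
    rcases eq_or_ne x j with rfl | hxj
    · rw [Equiv.swap_apply_right, hφ]
    · rw [Equiv.swap_apply_of_ne_of_ne hxi hxj]
  apply Finset.sum_involution (fun π _ => Equiv.swap i j * π)
  · intro π _
    have hsign : (Equiv.Perm.sign (Equiv.swap i j * π) : ℤ) = -(Equiv.Perm.sign π : ℤ) := by
      simp [Equiv.Perm.sign_swap hij]
    have hprod : ∏ k : Fin 3, A k (φ k) (φ ((Equiv.swap i j * π) k))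
        = ∏ k : Fin 3, A k (φ k) (φ (π k)) := by
      apply Finset.prod_congr rfl
      intro k _
      rw [Equiv.Perm.mul_apply, hswap]
    rw [hsign, hprod]
    push_cast
    ring
  · intro π _ _ h
    apply hij
    have : Equiv.swap i j = 1 := by
      have := congrArg (· * π⁻¹) h
      simpa [mul_assoc] using this
    exact ((Equiv.swap_apply_left i j).symm.trans (by rw [this]; rfl)).symm
  · intro π _; exact Finset.mem_univ _
  · intro π _
    simp [← mul_assoc]

/-- The `n = 2` case of the fundamental trace identity: the alternating sum over
`S_3` of the cycle-wise trace products of three 2×2 matrices vanishes. -/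
theorem alternating_cycle_trace_sum_vanishes (R : Type*) [CommRing R]
    (A : Fin 3 → Matrix (Fin 2) (Fin 2) R) :
    ∑ π : Equiv.Perm (Fin 3), ((Equiv.Perm.sign π : ℤ) : R) * trPerm π A = 0 := by
  simp only [trPerm, Finset.mul_sum]
  rw [Finset.sum_comm]
  apply Finset.sum_eq_zero
  intro φ _
  obtain ⟨i, j, hij, hφ⟩ : ∃ i j, i ≠ j ∧ φ i = φ j := by
    obtain ⟨i, j, hij, hφ⟩ := Fintype.exists_ne_map_eq_of_card_lt φ (by simp)
    exact ⟨i, j, hij, hφ⟩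
  exact inner_sum_zero A φ i j hij hφ
end

section
/- Let F be a field, m ≥ n+1 natural numbers, and q(X) = Σ_{π ∈ S_m} λ_π Π_{i=1}^m x_{π(i),i} a polynomial in the entries of an m×m matrix X, with coefficients λ_π ∈ F. If q((y_i(z_j))_{i,j}) = 0 for all y_1,...,y_m ∈ V* and z_1,...,z_m ∈ V where V = F^n, i.e. q vanishes on all m×m matrices of rank ≤ n, then q lies in the ideal of F[x_{ij}] generated by the (n+1)×(n+1) minors of X. -/
/-!
Write `x_π = ∏ᵢ x_{π(i),i}`. If `π` has a strictly decreasing subsequence of length `n + 1`,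
expanding the `(n+1)`-minor on those columns (and the rows `π` sends them to) expresses `x_π`,
modulo the determinantal ideal, through monomials `x_{πτ}` of lexicographically smaller
permutations; so every `x_π` reduces to a combination of `x_σ` with `σ` free of such
subsequences. A combination of this kind vanishing on matrices of rank `≤ n` is zero: colour
the positions of the lexicographically largest `σ` occurring by the length of the longest
decreasing subsequence ending there (Mirsky), which takes `n` colours `c` with `σ` increasing
on each colour class, and evaluate at the 0/1 matrix `[c (σ⁻¹ i) = c j]` of rank `≤ n`: among
the monomials occurring only `x_σ` survives.
-/

open MvPolynomial

/-- The generic `m×m` matrix of indeterminates. -/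
noncomputable def genericMatrix (F : Type*) [Field F] (m : ℕ) :
    Matrix (Fin m) (Fin m) (MvPolynomial (Fin m × Fin m) F) :=
  fun i j => MvPolynomial.X (i, j)

open Finset Equiv

section Lex
variable {ι β : Type*} [LinearOrder ι] [WellFoundedLT ι] [LinearOrder β]

theorem Equiv.Perm.exists_lt_apply_of_ne_one {τ : Perm ι} (hτ : τ ≠ 1) :
    ∃ i, (∀ j < i, τ j = j) ∧ i < τ i := by
  obtain ⟨i, hi, hmin⟩ := WellFounded.has_min wellFounded_lt {i | τ i ≠ i}
    (not_forall.mp fun h => hτ (Equiv.ext h))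
  have hfix : ∀ j < i, τ j = j := fun j hj => not_not.mp fun h => hmin j h hj
  refine ⟨i, hfix, lt_of_not_ge fun hle => hi ?_⟩
  rcases hle.lt_or_eq with hlt | heq
  exacts [τ.injective (hfix _ hlt), heq]

theorem toLex_lt_toLex_comp_perm {f : ι → β} {τ : Perm ι} (hτ : τ ≠ 1)
    (h : ∀ i, i < τ i → f i < f (τ i)) : toLex f < toLex (f ∘ τ) := by
  obtain ⟨i, hfix, hi⟩ := τ.exists_lt_apply_of_ne_one hτ
  exact ⟨i, fun j hj => by simp [hfix j hj], h i hi⟩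

theorem toLex_comp_perm_lt_toLex {f : ι → β} {τ : Perm ι} (hτ : τ ≠ 1)
    (h : ∀ i, i < τ i → f (τ i) < f i) : toLex (f ∘ τ) < toLex f := by
  obtain ⟨i, hfix, hi⟩ := τ.exists_lt_apply_of_ne_one hτ
  exact ⟨i, fun j hj => by simp [hfix j hj], h i hi⟩

end Lex

section Mirsky
variable {ι β : Type*} [LinearOrder ι] [Fintype ι] [LinearOrder β] (f : ι → β)

open Classical in
noncomputable def decreasingHeight (i : ι) : ℕ :=
  (univ.filter fun S : Finset ι => IsGreatest (S : Set ι) i ∧ StrictAntiOn f (S : Set ι)).sup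
    card

variable {f}

theorem le_decreasingHeight {i : ι} {S : Finset ι} (hi : IsGreatest (S : Set ι) i)
    (hS : StrictAntiOn f S) : #S ≤ decreasingHeight f i := by
  classical
  exact le_sup (f := card) (mem_filter.mpr ⟨mem_univ S, hi, hS⟩)

theorem exists_card_eq_decreasingHeight (i : ι) : ∃ S : Finset ι,
    IsGreatest (S : Set ι) i ∧ StrictAntiOn f S ∧ #S = decreasingHeight f i := by
  classical
  obtain ⟨S, hS, hcard⟩ := exists_mem_eq_sup
    (univ.filter fun S : Finset ι => IsGreatest (S : Set ι) i ∧ StrictAntiOn f (S : Set ι))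
    ⟨{i}, by simp [IsGreatest, upperBounds]⟩ card
  obtain ⟨-, hi, hanti⟩ := mem_filter.mp hS
  exact ⟨S, hi, hanti, by rw [decreasingHeight, hcard]⟩

theorem one_le_decreasingHeight (i : ι) : 1 ≤ decreasingHeight f i :=
  le_decreasingHeight (S := {i}) (by simp [IsGreatest, upperBounds]) (by simp)

theorem decreasingHeight_lt {i j : ι} (hij : i < j) (hf : f j < f i) :
    decreasingHeight f i < decreasingHeight f j := by
  classical
  obtain ⟨S, ⟨hiS, hSi⟩, hanti, hcard⟩ := exists_card_eq_decreasingHeight (f := f) i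
  have hjS : j ∉ S := fun hj => (hSi hj).not_gt hij
  have hgreat : IsGreatest ((insert j S : Finset ι) : Set ι) j :=
    ⟨by simp, by
      rw [coe_insert]
      rintro k (rfl | hk)
      exacts [le_rfl, (hSi hk).trans hij.le]⟩
  have hanti' : StrictAntiOn f ((insert j S : Finset ι) : Set ι) := by
    rw [coe_insert]
    rintro a (rfl | ha) b (rfl | hb) hab
    · exact absurd hab (lt_irrefl _)
    · exact absurd ((hSi hb).trans_lt hij) hab.not_gt
    · exact hf.trans_le (hanti.antitoneOn ha hiS (hSi ha))
    · exact hanti ha hb hab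
  have := le_decreasingHeight (f := f) hgreat hanti'
  rw [card_insert_of_notMem hjS] at this
  omega

theorem exists_monotoneOn_fibers_of_card_le {n : ℕ}
    (h : ∀ S : Finset ι, StrictAntiOn f S → #S ≤ n) :
    ∃ d : ι → Fin n, ∀ c, MonotoneOn f (d ⁻¹' {c}) := by
  have hlt : ∀ i, decreasingHeight f i - 1 < n := fun i => by
    obtain ⟨S, -, hS, hcard⟩ := exists_card_eq_decreasingHeight (f := f) i
    have := one_le_decreasingHeight (f := f) i
    have := h S hS
    omega
  refine ⟨fun i => ⟨_, hlt i⟩, fun c i hi j hj hij => ?_⟩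
  rcases hij.lt_or_eq with hij | rfl
  · refine le_of_not_gt fun hf => ?_
    have h1 := decreasingHeight_lt hij hf
    have h2 : decreasingHeight f i - 1 = decreasingHeight f j - 1 :=
      congrArg Fin.val (hi.trans hj.symm)
    have := one_le_decreasingHeight (f := f) i
    omega
  · rfl

end Mirsky

theorem Equiv.Perm.exists_comp_eq_forall_toLex_lt {ι : Type*} [LinearOrder ι] [Fintype ι]
    {n : ℕ} (σ₀ : Perm ι) (h : ∀ S : Finset ι, StrictAntiOn σ₀ S → #S ≤ n) :
    ∃ a b : ι → Fin n, a ∘ σ₀ = b ∧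
      ∀ σ : Perm ι, a ∘ σ = b → σ ≠ σ₀ → toLex ⇑σ₀ < toLex ⇑σ := by
  obtain ⟨d, hd⟩ := exists_monotoneOn_fibers_of_card_le h
  refine ⟨d ∘ σ₀.symm, d, by ext; simp, fun σ hσ hne => ?_⟩
  have hτ : σ₀⁻¹ * σ ≠ 1 := fun h => hne (inv_mul_eq_one.mp h).symm
  have hfib : ∀ i, d ((σ₀⁻¹ * σ) i) = d i := congrFun hσ
  have hσ_eq : ⇑σ = σ₀ ∘ ⇑(σ₀⁻¹ * σ) := by ext; simp
  rw [hσ_eq]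
  refine toLex_lt_toLex_comp_perm hτ fun i hi => ?_
  exact lt_of_le_of_ne (hd (d i) rfl (hfib i) hi.le) (σ₀.injective.ne hi.ne)

section Poly
variable (F : Type*) [Field F] {m : ℕ}

noncomputable def permMonomial (σ : Perm (Fin m)) : MvPolynomial (Fin m × Fin m) F :=
  ∏ i, X (σ i, i)

noncomputable def determinantalIdeal (m n : ℕ) : Ideal (MvPolynomial (Fin m × Fin m) F) :=
  Ideal.span {p | ∃ I J : Fin (n + 1) ↪ Fin m, p = ((genericMatrix F m).submatrix I J).det}

def rankLELocus (m n : ℕ) : Set (Fin m × Fin m → F) :=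
  {x | ∃ y z : Fin m → Fin n → F, x = fun p => ∑ k, y p.1 k * z p.2 k}

variable {F}

theorem Matrix.det_mul_eq_zero_of_card_lt {k l : Type*} [Fintype k] [Fintype l] [DecidableEq k]
    (A : Matrix k l F) (B : Matrix l k F) (hlt : Fintype.card l < Fintype.card k) :
    (A * B).det = 0 := by
  by_contra h
  have hrank := (A * B).rank_of_isUnit ((Matrix.isUnit_iff_isUnit_det _).mpr (IsUnit.mk0 _ h))
  have := (A.rank_mul_le_right B).trans B.rank_le_card_height
  omega

theorem determinantalIdeal_le_vanishingIdeal (m n : ℕ) :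
    determinantalIdeal F m n ≤ vanishingIdeal F (rankLELocus F m n) := by
  refine Ideal.span_le.mpr ?_
  rintro _ ⟨I, J, rfl⟩ _ ⟨y, z, rfl⟩
  change eval _ _ = 0
  rw [RingHom.map_det]
  convert Matrix.det_mul_eq_zero_of_card_lt (Matrix.of fun k l => y (I k) l)
    (Matrix.of fun l k => z (J k) l) (by simp)
  ext
  simp [genericMatrix, Matrix.mul_apply]

theorem det_submatrix_mem_determinantalIdeal {n : ℕ} {S : Finset (Fin m)} (hS : #S = n + 1)
    {r : S → Fin m} (hr : Function.Injective r) :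
    ((genericMatrix F m).submatrix r (↑)).det ∈ determinantalIdeal F m n := by
  let e : Fin (n + 1) ≃ S := (equivFinOfCardEq hS).symm
  refine Ideal.subset_span ⟨⟨r ∘ e, hr.comp e.injective⟩,
    ⟨(↑) ∘ e, Subtype.val_injective.comp e.injective⟩, ?_⟩
  exact (Matrix.det_submatrix_equiv_self e _).symm

theorem det_submatrix_mul_prod_compl_eq_sum (π : Perm (Fin m)) (S : Finset (Fin m)) :
    ((genericMatrix F m).submatrix (fun s : S => π s) (↑)).det * ∏ i ∈ Sᶜ, X (π i, i) =
      ∑ p : Perm S, Perm.sign p • permMonomial F (π * Perm.ofSubtype p) := by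
  rw [Matrix.det_apply, sum_mul]
  refine sum_congr rfl fun p _ => ?_
  rw [smul_mul_assoc, permMonomial, ← prod_mul_prod_compl S, ← prod_coe_sort S]
  congr 2
  · refine prod_congr rfl fun s _ => ?_
    simp [genericMatrix, Perm.ofSubtype_apply_coe]
  · refine prod_congr rfl fun i hi => ?_
    rw [Perm.mul_apply, Perm.ofSubtype_apply_of_not_mem p (by simpa using hi)]

variable (F) in
noncomputable def standardSpan (m n : ℕ) : Submodule F (MvPolynomial (Fin m × Fin m) F) :=
  Submodule.span F (permMonomial F '' {σ | ∀ S : Finset (Fin m), StrictAntiOn σ S → #S ≤ n})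

theorem permMonomial_mem_standardSpan_sup {n : ℕ} (π : Perm (Fin m)) :
    permMonomial F π ∈ standardSpan F m n ⊔ (determinantalIdeal F m n).restrictScalars F := by
  classical
  have hwf := InvImage.wf (fun π : Perm (Fin m) => toLex ⇑π) wellFounded_lt
  induction π using hwf.induction with
  | _ π ih =>
  by_cases hπ : ∀ S : Finset (Fin m), StrictAntiOn π S → #S ≤ n
  · exact Submodule.mem_sup_left (Submodule.subset_span ⟨π, hπ, rfl⟩)
  push Not at hπ
  obtain ⟨S₀, hanti₀, hcard₀⟩ := hπ
  obtain ⟨S, hSS₀, hS⟩ := exists_subset_card_eq hcard₀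
  have hanti : StrictAntiOn π S := hanti₀.mono (coe_subset.mpr hSS₀)
  have hlt : ∀ p : Perm S, p ≠ 1 → toLex ⇑(π * Perm.ofSubtype p) < toLex ⇑π := by
    intro p hp
    refine toLex_comp_perm_lt_toLex (Perm.ofSubtype_injective.ne_iff' (map_one _) |>.mpr hp) ?_
    intro i hi
    by_cases hiS : i ∈ S
    · rw [Perm.ofSubtype_apply_of_mem p hiS] at hi ⊢
      exact hanti hiS (p ⟨i, hiS⟩).2 hi
    · rw [Perm.ofSubtype_apply_of_not_mem p hiS] at hi
      exact (lt_irrefl i hi).elim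
  -- the `p = 1` term of the expansion is `x_π`; by `hlt` the others are handled by induction
  have hdet := det_submatrix_mul_prod_compl_eq_sum (F := F) π S
  rw [← add_sum_erase _ _ (mem_univ 1)] at hdet
  simp only [map_one, mul_one, one_smul] at hdet
  rw [eq_sub_of_add_eq hdet.symm]
  refine sub_mem (Submodule.mem_sup_right (Ideal.mul_mem_right _ _
    (det_submatrix_mem_determinantalIdeal hS fun a b h => Subtype.val_injective (π.injective h))))
    (sum_mem fun p hp => ?_)
  rw [Units.smul_def]
  exact Submodule.smul_of_tower_mem _ _ (ih _ (hlt p (ne_of_mem_erase hp)))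

theorem eval_permMonomial_indicator {ι : Type*} [DecidableEq ι] (a b : Fin m → ι)
    (σ : Perm (Fin m)) :
    eval (fun p => if a p.1 = b p.2 then 1 else 0) (permMonomial F σ) =
      if a ∘ σ = b then 1 else 0 := by
  simp [permMonomial, Fintype.prod_boole, _root_.funext_iff]

theorem eq_zero_of_mem_standardSpan_of_mem_vanishingIdeal {n : ℕ}
    {r : MvPolynomial (Fin m × Fin m) F} (hr : r ∈ standardSpan F m n)
    (hv : r ∈ vanishingIdeal F (rankLELocus F m n)) : r = 0 := by
  classical
  obtain ⟨l, hl, rfl⟩ := (Finsupp.mem_span_image_iff_linearCombination F).mp hr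
  by_contra hne
  have hsupp : l.support.Nonempty := by
    rw [Finsupp.support_nonempty_iff]
    rintro rfl
    exact hne (map_zero _)
  obtain ⟨σ₀, hσ₀, hmax⟩ := l.support.exists_max_image (fun σ => toLex ⇑σ) hsupp
  obtain ⟨a, b, hab, hlt⟩ := σ₀.exists_comp_eq_forall_toLex_lt (hl hσ₀)
  have heval := hv (fun p => if a p.1 = b p.2 then (1 : F) else 0)
    ⟨fun i k => if a i = k then 1 else 0, fun j k => if b j = k then 1 else 0, by ext; simp⟩
  change eval _ _ = 0 at heval
  rw [Finsupp.linearCombination_apply, Finsupp.sum, map_sum, sum_eq_single σ₀] at heval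
  · rw [smul_eval, eval_permMonomial_indicator, if_pos hab, mul_one] at heval
    exact Finsupp.mem_support_iff.mp hσ₀ heval
  · intro σ hσ hne
    rw [smul_eval, eval_permMonomial_indicator,
      if_neg fun h => (hmax σ hσ).not_gt (hlt σ h hne), mul_zero]
  · exact fun h => (h hσ₀).elim

end Poly

theorem sft_determinantal_ideal_general (F : Type*) [Field F]
    (m n : ℕ) (lam : Equiv.Perm (Fin m) → F)
    (q : MvPolynomial (Fin m × Fin m) F)
    (hq : q = ∑ π : Equiv.Perm (Fin m), MvPolynomial.C (lam π) *
      ∏ i : Fin m, MvPolynomial.X (π i, i))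
    (hvan : ∀ (y z : Fin m → Fin n → F),
      MvPolynomial.eval (fun p : Fin m × Fin m => ∑ k : Fin n, y p.1 k * z p.2 k) q = 0) :
    q ∈ Ideal.span {p : MvPolynomial (Fin m × Fin m) F |
      ∃ (I J : Fin (n + 1) ↪ Fin m),
        p = Matrix.det ((genericMatrix F m).submatrix I J)} := by
  have hq_mem : q ∈ standardSpan F m n ⊔ (determinantalIdeal F m n).restrictScalars F := by
    rw [hq]
    exact sum_mem fun π _ => by
      rw [C_mul']
      exact Submodule.smul_mem _ _ (permMonomial_mem_standardSpan_sup π)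
  obtain ⟨r, hr, f, hf, rfl⟩ := Submodule.mem_sup.mp hq_mem
  have hvan' : r + f ∈ vanishingIdeal F (rankLELocus F m n) := by
    rintro _ ⟨y, z, rfl⟩
    exact hvan y z
  have hr0 : r = 0 := eq_zero_of_mem_standardSpan_of_mem_vanishingIdeal hr (by
    simpa using sub_mem hvan' (determinantalIdeal_le_vanishingIdeal m n hf))
  rwa [hr0, zero_add]

/-- Second fundamental theorem instance: a polynomial of the form
`q(X) = Σ_π λ_π Π_i x_{π(i),i}` vanishing on all matrices `(yᵢ(z_j))` of rank ≤ n
lies in the ideal generated by the `(n+1)×(n+1)` minors. -/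
theorem sft_determinantal_ideal (F : Type*) [Field F] [IsAlgClosed F] [CharZero F]
    (m n : ℕ) (hm : n + 1 ≤ m) (lam : Equiv.Perm (Fin m) → F)
    (q : MvPolynomial (Fin m × Fin m) F)
    (hq : q = ∑ π : Equiv.Perm (Fin m), MvPolynomial.C (lam π) *
      ∏ i : Fin m, MvPolynomial.X (π i, i))
    (hvan : ∀ (y z : Fin m → Fin n → F),
      MvPolynomial.eval (fun p : Fin m × Fin m => ∑ k : Fin n, y p.1 k * z p.2 k) q = 0) :
    q ∈ Ideal.span {p : MvPolynomial (Fin m × Fin m) F |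
      ∃ (I J : Fin (n + 1) ↪ Fin m),
        p = Matrix.det ((genericMatrix F m).submatrix I J)} :=
  sft_determinantal_ideal_general F m n lam q hq hvan
end

section
/- Let F be an algebraically closed field of characteristic 0 and suppose f : S_m → F satisfies: the polynomial q(X) = Σ_{π ∈ S_m} f(π) Π_i x_{π(i),i} vanishes on all m×m matrices of rank ≤ n over F. If moreover for every decomposition q = Σ_{I,J, |I|=|J|=n+1} q_{I,J} det(X_{I,J}) each monomial of q has degree exactly 1 in each row and each column of X, then the coefficients q_{I,J} can be chosen multilinear: of total degree 1 in the rows not in I and degree 0 in rows in I (similarly for columns and J). -/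
/-!
Let `f` be the coefficient vector of `q`. Substituting `x_{r c} ↦ y_{h c, r}` for a colouring
`h : [m] → [n]` gives a matrix of rank `≤ n`, so every coefficient of the result vanishes: for
all `φ, h : [m] → [n]`, the sum of `f` over the permutations `μ` with `φ ∘ μ = h` is zero.
Call such `f` rank relations. The antisymmetrizer of `π` along `n + 1` positions `e` is one
(two positions share a colour, and swapping them reverses signs), and its polynomial is the
monomial `∏_{c ∉ e} x_{π c, c}` times the minor on rows `π ∘ e` and columns `e`.

Conversely the rank relations are spanned by antisymmetrizers. Modulo antisymmetrizers every `f`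
can be straightened, lexicographically downwards, onto permutations with no decreasing
subsequence of length `n + 1`. A rank relation supported on those vanishes: by Mirsky's theorem
such a `σ` is increasing on the classes of some `n`-colouring `h`, which makes `σ` the
lexicographically least permutation in its fibre `{μ | h ∘ σ⁻¹ ∘ μ = h}`, and one argues
lexicographically upwards.
-/

open MvPolynomial

/-- The generic `m×m` matrix of indeterminates. -/
noncomputable def genMatrix (F : Type*) [Field F] (m : ℕ) :
    Matrix (Fin m) (Fin m) (MvPolynomial (Fin m × Fin m) F) :=
  fun i j => MvPolynomial.X (i, j)

open Finset Equiv

theorem Matrix.rank_submatrix_id_le {R ι ν κ : Type*} [CommRing R] [StrongRankCondition R]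
    [Fintype ν] [Fintype κ] (N : Matrix ι ν R) (h : κ → ν) :
    (N.submatrix id h).rank ≤ N.rank := by
  classical
  have hN : N * (1 : Matrix ν ν R).submatrix id h = N.submatrix id h := by
    simpa using mul_submatrix_one (Equiv.refl _) h N
  exact hN ▸ rank_mul_le_left _ _

theorem Finsupp.sum_single_graph_apply {ι κ : Type*} [DecidableEq ι] [DecidableEq κ]
    (S : Finset ι) (φ : ι → κ) (k : κ) (j : ι) :
    (∑ i ∈ S, single (φ i, i) 1 : (κ × ι) →₀ ℕ) (k, j) =
      if j ∈ S ∧ φ j = k then 1 else 0 := by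
  rw [finsetSum_apply]
  split_ifs with h
  · rw [Finset.sum_eq_single_of_mem j h.1 fun i _ hij => by simp [hij.symm]]
    simp [h.2]
  · exact Finset.sum_eq_zero fun i hi => by
      simp only [single_apply, Prod.mk.injEq]
      exact if_neg fun hi' : φ i = k ∧ i = j => h (hi'.2 ▸ ⟨hi, hi'.1⟩)

theorem MvPolynomial.coeff_prod_X_graph {R ι κ : Type*} [CommSemiring R] [Fintype ι]
    [DecidableEq ι] [DecidableEq κ] (φ ψ : ι → κ) :
    coeff (∑ i, Finsupp.single (φ i, i) 1) (∏ i, X (ψ i, i) : MvPolynomial (κ × ι) R) =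
      if ψ = φ then 1 else 0 := by
  simp only [X, ← monomial_sum_one, coeff_monomial]
  refine if_congr ?_ rfl rfl
  refine ⟨fun h => _root_.funext fun j => ?_, fun h => h ▸ rfl⟩
  simpa [Finsupp.sum_single_graph_apply, eq_comm] using DFunLike.congr_fun h (ψ j, j)

theorem AddSubmonoid.exists_mem_sum_mul_eq_sum_mul {ι κ A : Type*} [Fintype ι] [Fintype κ]
    [DecidableEq κ] [NonUnitalNonAssocSemiring A] (P : κ → AddSubmonoid A) (key : ι → κ)
    (p : ι → A) (hp : ∀ i, p i ∈ P (key i)) (d : κ → A) :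
    ∃ c : κ → A, (∀ k, c k ∈ P k) ∧ ∑ i, p i * d (key i) = ∑ k, c k * d k := by
  refine ⟨fun k => ∑ i ∈ univ.filter (key · = k), p i,
    fun k => _root_.sum_mem fun i hi => (mem_filter.1 hi).2 ▸ hp i, ?_⟩
  rw [← sum_fiberwise univ key]
  exact sum_congr rfl fun k _ => by
    rw [sum_mul]; exact sum_congr rfl fun i hi => by rw [(mem_filter.1 hi).2]

namespace Equiv.Perm

theorem comp_viaEmbeddingHom_swap {α β γ : Type*} [DecidableEq α] (e : α ↪ β)
    (h : β → γ) {b b' : α} (hb : h (e b) = h (e b')) :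
    h ∘ ⇑(viaEmbeddingHom e (swap b b')) = h := by
  funext c
  by_cases hc : c ∈ Set.range e
  · obtain ⟨a, rfl⟩ := hc
    simp only [Function.comp_apply, viaEmbeddingHom_apply, viaEmbedding_apply]
    rw [swap_apply_def]
    split_ifs with h₁ h₂ <;> simp_all
  · simp [viaEmbeddingHom_apply, viaEmbedding_apply_of_notMem _ _ _ hc]

variable {α : Type*} [LinearOrder α]

theorem exists_lt_apply_of_ne_one_s10 [Fintype α] {τ : Perm α} (hτ : τ ≠ 1) :
    ∃ p, (∀ c < p, τ c = c) ∧ p < τ p := by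
  have hne : τ.support.Nonempty := by
    rwa [Finset.nonempty_iff_ne_empty, Ne, support_eq_empty_iff]
  have hmoved : τ (τ.support.min' hne) ≠ τ.support.min' hne := mem_support.1 (min'_mem _ hne)
  have hfix : ∀ c < τ.support.min' hne, τ c = c := fun c hc =>
    notMem_support.1 fun hc' => (min'_le _ c hc').not_gt hc
  refine ⟨_, hfix, lt_of_le_of_ne (not_lt.1 fun h => ?_) hmoved.symm⟩
  exact hmoved (τ.injective (hfix _ h))

theorem toLex_lt_toLex_mul [Fintype α] {σ τ : Perm α} (hτ : τ ≠ 1)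
    (h : ∀ c, c < τ c → σ c < σ (τ c)) : toLex ⇑σ < toLex ⇑(σ * τ) := by
  obtain ⟨p, hfix, hp⟩ := exists_lt_apply_of_ne_one_s10 hτ
  exact ⟨p, fun c hc => by simp [hfix c hc], h p hp⟩

theorem toLex_mul_lt_toLex [Fintype α] {σ τ : Perm α} (hτ : τ ≠ 1)
    (h : ∀ c, c < τ c → σ (τ c) < σ c) : toLex ⇑(σ * τ) < toLex ⇑σ := by
  obtain ⟨p, hfix, hp⟩ := exists_lt_apply_of_ne_one_s10 hτ
  exact ⟨p, fun c hc => by simp [hfix c hc], h p hp⟩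

def HasDecreasingSubseq (σ : Perm α) (k : ℕ) : Prop :=
  ∃ e : Fin k → α, StrictMono e ∧ StrictAnti (σ ∘ e)

/-- `α` ordered so that the chains are the decreasing subsequences of `σ`. -/
def InversionOrder (_σ : Perm α) : Type _ := α

def InversionOrder.of (σ : Perm α) : α → InversionOrder σ := id

instance (σ : Perm α) : PartialOrder (InversionOrder σ) :=
  PartialOrder.lift (fun c : α => (c, OrderDual.toDual (σ c))) fun _ _ h => congrArg Prod.fst h

theorem InversionOrder.of_lt_of {σ : Perm α} {c d : α} :
    of σ c < of σ d ↔ c < d ∧ σ d < σ c := by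
  change (c, OrderDual.toDual (σ c)) < (d, OrderDual.toDual (σ d)) ↔ _
  rw [Prod.lt_iff, OrderDual.toDual_le_toDual, OrderDual.toDual_lt_toDual]
  constructor
  · rintro (⟨hcd, hσ⟩ | ⟨hcd, hσ⟩)
    · exact ⟨hcd, hσ.lt_of_ne (σ.injective.ne hcd.ne')⟩
    · exact ⟨hcd.lt_of_ne fun h => hσ.ne (congrArg σ h.symm), hσ⟩
  · exact fun h => Or.inl ⟨h.1, h.2.le⟩

theorem InversionOrder.height_lt_of_not_hasDecreasingSubseq {σ : Perm α} {n : ℕ}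
    (hσ : ¬ HasDecreasingSubseq σ (n + 1)) (c : α) : Order.height (of σ c) < n := by
  by_contra! hc
  obtain ⟨p, -, rfl⟩ := Order.exists_series_of_le_height _ hc
  exact hσ ⟨fun i => p i, fun i j hij => ((of_lt_of (σ := σ)).1 (p.strictMono hij)).1,
    fun i j hij => ((of_lt_of (σ := σ)).1 (p.strictMono hij)).2⟩

/-- Mirsky's theorem for the inversion order: colour `c` by its height. -/
theorem exists_coloring_of_not_hasDecreasingSubseq {σ : Perm α} {n : ℕ}
    (hσ : ¬ HasDecreasingSubseq σ (n + 1)) :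
    ∃ h : α → Fin n, ∀ c d, c < d → h c = h d → σ c < σ d := by
  have height_eq (c : α) : ∃ k < n, Order.height (InversionOrder.of σ c) = k := by
    have hc := InversionOrder.height_lt_of_not_hasDecreasingSubseq hσ c
    lift Order.height (InversionOrder.of σ c) to ℕ using hc.ne_top with k
    exact ⟨k, by exact_mod_cast hc, rfl⟩
  choose H hHn hH using height_eq
  refine ⟨fun c => ⟨H c, hHn c⟩, fun c d hcd hcol => ?_⟩
  by_contra! hσcd
  have hlt := Order.height_strictMono
    (InversionOrder.of_lt_of.2 ⟨hcd, hσcd.lt_of_ne (σ.injective.ne hcd.ne')⟩)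
    (hH c ▸ ENat.natCast_lt_top _)
  rw [hH, hH, Fin.mk.inj_iff.1 hcol] at hlt
  exact hlt.false

end Equiv.Perm

namespace MultilinearSFT

open Perm Submodule

variable (F : Type*) [Field F] (m n : ℕ)

/-- The sum below is the coefficient of `∏ r, y_{φ r, r}` in `∑ f μ ∏ x_{μ i, i}` after the
substitution `x_{r c} ↦ y_{h c, r}`, which is a matrix of rank `≤ n`. -/
def rankRelations : Submodule F (Perm (Fin m) → F) where
  carrier := {f | ∀ φ h : Fin m → Fin n,
    ∑ μ ∈ univ.filter fun μ : Perm (Fin m) => φ ∘ ⇑μ = h, f μ = 0}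
  add_mem' hf hg φ h := by
    simp only [Pi.add_apply, sum_add_distrib, hf φ h, hg φ h, add_zero]
  zero_mem' := by simp
  smul_mem' a f hf φ h := by
    simp only [Pi.smul_apply, smul_eq_mul, ← mul_sum, hf φ h, mul_zero]

def vanishingOnDecreasing (k : ℕ) : Submodule F (Perm (Fin m) → F) :=
  pi {σ | HasDecreasingSubseq σ k} fun _ => ⊥

variable {F m n}

noncomputable def antisymmetrizer {k : ℕ} (π : Perm (Fin m)) (e : Fin k ↪ Fin m) :
    Perm (Fin m) → F :=
  ∑ w : Perm (Fin k), sign w • Pi.single (π * viaEmbeddingHom e w) 1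

variable (F m) in
noncomputable def antisymmetrizerSpan (k : ℕ) : Submodule F (Perm (Fin m) → F) :=
  span F (Set.range fun γ : Perm (Fin m) × (Fin k ↪ Fin m) => antisymmetrizer γ.1 γ.2)

theorem antisymmetrizer_mem_rankRelations {k : ℕ} (hk : n < k) (π : Perm (Fin m))
    (e : Fin k ↪ Fin m) : antisymmetrizer π e ∈ rankRelations F m n := by
  intro φ h
  -- Two positions of `e` share a colour of `h`; swapping them is a sign-reversing involution.
  obtain ⟨b, b', hbb', hcol⟩ :=
    Fintype.exists_ne_map_eq_of_card_lt (h ∘ e) (by simpa using hk)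
  set T := viaEmbeddingHom e (swap b b')
  have hT : h ∘ T = h := comp_viaEmbeddingHom_swap e h hcol
  have hTT : T * T = 1 := by rw [← map_mul, swap_mul_self, map_one]
  have hP (w : Perm (Fin k)) : φ ∘ ⇑(π * viaEmbeddingHom e (w * swap b b')) = h ↔
      φ ∘ ⇑(π * viaEmbeddingHom e w) = h := by
    rw [map_mul, ← mul_assoc, coe_mul _ T, ← Function.comp_assoc]
    refine ⟨fun H => ?_, fun H => H ▸ hT⟩
    rw [← hT, ← H, Function.comp_assoc, ← coe_mul, hTT, coe_one, Function.comp_id]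
  calc ∑ μ ∈ univ.filter fun μ : Perm (Fin m) => φ ∘ ⇑μ = h, antisymmetrizer π e μ
      = ∑ w : Perm (Fin k),
          sign w • if φ ∘ ⇑(π * viaEmbeddingHom e w) = h then (1 : F) else 0 := by
        simp only [antisymmetrizer, Finset.sum_apply, Pi.smul_apply, Pi.single_apply, smul_ite,
          smul_zero]
        rw [sum_comm]
        simp only [sum_ite_eq', mem_filter, mem_univ, true_and]
    _ = 0 := by
        refine sum_involution (fun w _ => w * swap b b') (fun w _ => ?_) (fun w _ _ => ?_)
          (by simp) (by simp)
        · simp only [hP]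
          rw [Perm.sign_mul, sign_swap hbb', mul_neg_one, Units.neg_smul, add_neg_cancel]
        · simpa using hbb'

theorem single_mem_antisymmetrizerSpan_sup (σ : Perm (Fin m)) :
    Pi.single σ 1 ∈ antisymmetrizerSpan F m (n + 1) ⊔ vanishingOnDecreasing F m (n + 1) := by
  induction σ using (InvImage.wf (toLex ⇑· : Perm (Fin m) → _) wellFounded_lt).induction with
  | _ σ ih =>
  by_cases hσ : HasDecreasingSubseq σ (n + 1)
  -- `σ` is the lexicographically largest permutation occurring in its antisymmetrizer along a
  -- decreasing subsequence.
  · obtain ⟨e, he, hσe⟩ := hσ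
    set e' : Fin (n + 1) ↪ Fin m := ⟨e, he.injective⟩
    have hdecomp : Pi.single σ 1 = antisymmetrizer σ e' -
        ∑ w ∈ univ.erase 1,
          sign w • Pi.single (M := fun _ => F) (σ * viaEmbeddingHom e' w) 1 := by
      rw [antisymmetrizer, ← add_sum_erase _ _ (mem_univ 1)]
      simp
    rw [hdecomp]
    refine sub_mem (mem_sup_left (subset_span ⟨(σ, e'), rfl⟩))
      (sum_mem fun w hw => smul_of_tower_mem _ _ (ih _ ?_))
    refine toLex_mul_lt_toLex ((map_ne_one_iff _ (viaEmbeddingHom_injective e')).2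
      (ne_of_mem_erase hw)) fun c hc => ?_
    by_cases hce : c ∈ Set.range e'
    · obtain ⟨a, rfl⟩ := hce
      rw [viaEmbeddingHom_apply, viaEmbedding_apply] at hc ⊢
      exact hσe (he.lt_iff_lt.1 hc)
    · rw [viaEmbeddingHom_apply, viaEmbedding_apply_of_notMem _ _ _ hce] at hc
      exact absurd hc (lt_irrefl c)
  · exact mem_sup_right fun μ hμ => by
      simp [show μ ≠ σ by rintro rfl; exact hσ hμ]

theorem antisymmetrizerSpan_sup_vanishingOnDecreasing :
    antisymmetrizerSpan F m (n + 1) ⊔ vanishingOnDecreasing F m (n + 1) = ⊤ := by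
  refine eq_top_iff.2 ((Pi.basisFun F _).span_eq.symm.le.trans (span_le.2 ?_))
  rintro _ ⟨σ, rfl⟩
  simpa using single_mem_antisymmetrizerSpan_sup σ

theorem rankRelations_inf_vanishingOnDecreasing :
    rankRelations F m n ⊓ vanishingOnDecreasing F m (n + 1) = ⊥ := by
  refine eq_bot_iff.2 fun f ⟨hrel, hvan⟩ => (mem_bot F).2 (funext fun σ => ?_)
  induction σ using (InvImage.wf (toLex ⇑· : Perm (Fin m) → _) wellFounded_gt).induction with
  | _ σ ih =>
  by_cases hσ : HasDecreasingSubseq σ (n + 1)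
  · exact hvan σ hσ
  -- `σ` is increasing on the colour classes of `h`, so it is the lexicographically least
  -- permutation `μ` with `h ∘ σ⁻¹ ∘ μ = h`.
  obtain ⟨h, hinc⟩ := exists_coloring_of_not_hasDecreasingSubseq hσ
  have hsum := hrel (h ∘ σ.symm) h
  rwa [sum_eq_single_of_mem σ (by simp [Function.comp_assoc]) fun μ hμ hne => ih μ ?_] at hsum
  have hcol : h ∘ ⇑(σ⁻¹ * μ) = h := (mem_filter.1 hμ).2
  show toLex ⇑σ < toLex ⇑μ
  simpa using toLex_lt_toLex_mul (σ := σ) (τ := σ⁻¹ * μ)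
    (fun h₁ => hne (inv_mul_eq_one.1 h₁).symm) fun c hc => hinc c _ hc (congrFun hcol c).symm

theorem antisymmetrizerSpan_le_rankRelations {k : ℕ} (hk : n < k) :
    antisymmetrizerSpan F m k ≤ rankRelations F m n :=
  span_le.2 <| by rintro _ ⟨γ, rfl⟩; exact antisymmetrizer_mem_rankRelations hk γ.1 γ.2

theorem rankRelations_eq_antisymmetrizerSpan :
    rankRelations F m n = antisymmetrizerSpan F m (n + 1) := by
  refine le_antisymm (fun f hf => ?_) (antisymmetrizerSpan_le_rankRelations n.lt_succ_self)
  have hf' : f ∈ antisymmetrizerSpan F m (n + 1) ⊔ vanishingOnDecreasing F m (n + 1) := by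
    rw [antisymmetrizerSpan_sup_vanishingOnDecreasing]
    exact mem_top
  obtain ⟨g, hg, b, hb, rfl⟩ := mem_sup.1 hf'
  have hbrel : b ∈ rankRelations F m n := by
    simpa using sub_mem hf (antisymmetrizerSpan_le_rankRelations n.lt_succ_self hg)
  have hb0 : b = 0 := by
    rw [← mem_bot F, ← rankRelations_inf_vanishingOnDecreasing]
    exact ⟨hbrel, hb⟩
  simpa [hb0] using hg

variable (F m) in
noncomputable def permPoly : (Perm (Fin m) → F) →ₗ[F] MvPolynomial (Fin m × Fin m) F :=
  Fintype.linearCombination F fun μ => ∏ i, X (μ i, i)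

theorem permPoly_apply (f : Perm (Fin m) → F) :
    permPoly F m f = ∑ μ, C (f μ) * ∏ i, X (μ i, i) := by
  simp [permPoly, Fintype.linearCombination_apply, smul_eq_C_mul]

theorem permPoly_single (μ : Perm (Fin m)) :
    permPoly F m (Pi.single μ 1) = ∏ i, X (μ i, i) := by
  rw [permPoly, Fintype.linearCombination_apply_single, one_smul]

theorem mem_rankRelations_of_eval_eq_zero [Infinite F] {f : Perm (Fin m) → F}
    (hvan : ∀ M : Matrix (Fin m) (Fin m) F, M.rank ≤ n →
      eval (fun p : Fin m × Fin m => M p.1 p.2) (permPoly F m f) = 0) :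
    f ∈ rankRelations F m n := by
  intro φ h
  set g : Fin m × Fin m → Fin n × Fin m := fun p => (h p.2, p.1)
  have hzero : rename g (permPoly F m f) = 0 := MvPolynomial.funext fun y => by
    simpa [eval_rename, g, Function.comp_def] using
      hvan ((Matrix.of fun r k => y (k, r)).submatrix id h)
        ((Matrix.rank_submatrix_id_le _ h).trans (Matrix.rank_le_width _))
  have hren : rename g (permPoly F m f) = ∑ μ, C (f μ) * ∏ r, X (h (μ.symm r), r) := by
    simp only [permPoly_apply, map_sum, map_mul, rename_C, map_prod, rename_X]
    exact sum_congr rfl fun μ _ => congrArg _ <| by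
      rw [← Equiv.prod_comp μ fun r => X (h (μ.symm r), r)]; simp [g]
  have := congrArg (coeff (∑ r, Finsupp.single (φ r, r) 1)) hzero
  simp only [hren, coeff_sum, coeff_C_mul, coeff_prod_X_graph, mul_ite, mul_one, mul_zero,
    coeff_zero] at this
  rw [sum_filter]
  exact (sum_congr rfl fun μ _ =>
    if_congr (eq_comm.trans (Equiv.comp_symm_eq μ φ h).symm) rfl rfl).trans this

theorem prod_X_mul_viaEmbedding {k : ℕ} (π : Perm (Fin m)) (e : Fin k ↪ Fin m)
    (w : Perm (Fin k)) :
    ∏ c, (X ((π * viaEmbeddingHom e w) c, c) : MvPolynomial (Fin m × Fin m) F) =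
      (∏ c ∈ (univ.map e)ᶜ, X (π c, c)) * ∏ b, X (π (e (w b)), e b) := by
  rw [← prod_mul_prod_compl (univ.map e), mul_comm, prod_map]
  congr 1
  · refine prod_congr rfl fun c hc => ?_
    have hc' : c ∉ Set.range e := by simpa using hc
    rw [coe_mul, Function.comp_apply, viaEmbeddingHom_apply,
      viaEmbedding_apply_of_notMem _ _ _ hc']
  · simp [viaEmbeddingHom_apply, viaEmbedding_apply]

theorem permPoly_antisymmetrizer {k : ℕ} (π : Perm (Fin m)) (e : Fin k ↪ Fin m) :
    permPoly F m (antisymmetrizer π e) = (∏ c ∈ (univ.map e)ᶜ, X (π c, c)) *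
      ((genMatrix F m).submatrix (e.trans π.toEmbedding) e).det := by
  rw [antisymmetrizer, map_sum, Matrix.det_apply, mul_sum]
  refine sum_congr rfl fun w _ => ?_
  rw [Units.smul_def, Units.smul_def, map_zsmul, permPoly_single, mul_smul_comm,
    prod_X_mul_viaEmbedding]
  rfl

def complementaryExponents {k : ℕ} (I J : Fin k ↪ Fin m) : Set ((Fin m × Fin m) →₀ ℕ) :=
  {d | (∀ r, ∑ j, d (r, j) = if r ∈ Set.range I then 0 else 1) ∧
    ∀ s, ∑ i, d (i, s) = if s ∈ Set.range J then 0 else 1}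

theorem prod_compl_X_mem_restrictSupport {k : ℕ} (π : Perm (Fin m)) (e : Fin k ↪ Fin m) :
    (∏ c ∈ (univ.map e)ᶜ, X (π c, c) : MvPolynomial (Fin m × Fin m) F) ∈
      restrictSupport F (complementaryExponents (e.trans π.toEmbedding) e) := by
  simp only [X, ← monomial_sum_one, monomial_mem_restrictSupport]
  left
  refine ⟨fun r => ?_, fun s => ?_⟩
  · simp only [Finsupp.sum_single_graph_apply, ← Equiv.eq_symm_apply, and_comm (a := _ ∈ _),
      ite_and, Finset.sum_ite_eq', mem_univ, if_true]
    simp only [mem_compl, mem_map, mem_univ, true_and, Set.mem_range,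
      Function.Embedding.trans_apply, Equiv.coe_toEmbedding, Equiv.eq_symm_apply, ite_not]
  · simp only [Finsupp.sum_single_graph_apply, and_comm (a := _ ∈ _), ite_and, Finset.sum_ite_eq,
      mem_univ, if_true]
    simp only [mem_compl, mem_map, mem_univ, true_and, Set.mem_range, ite_not]

end MultilinearSFT

open MultilinearSFT

theorem sft_multilinear_coefficients_general (F : Type*) [Field F] [CharZero F]
    (m n : ℕ) (f : Equiv.Perm (Fin m) → F)
    (q : MvPolynomial (Fin m × Fin m) F)
    (hq : q = ∑ π : Equiv.Perm (Fin m), MvPolynomial.C (f π) *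
      ∏ i : Fin m, MvPolynomial.X (π i, i))
    (hvan : ∀ M : Matrix (Fin m) (Fin m) F, M.rank ≤ n →
      MvPolynomial.eval (fun p : Fin m × Fin m => M p.1 p.2) q = 0) :
    ∃ c : (Fin (n + 1) ↪ Fin m) × (Fin (n + 1) ↪ Fin m) →
        MvPolynomial (Fin m × Fin m) F,
      q = ∑ IJ : (Fin (n + 1) ↪ Fin m) × (Fin (n + 1) ↪ Fin m),
            c IJ * Matrix.det ((genMatrix F m).submatrix IJ.1 IJ.2) ∧
      ∀ IJ, ∀ mon ∈ (c IJ).support,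
        (∀ r : Fin m,
          (∑ j : Fin m, mon (r, j)) = if r ∈ Set.range IJ.1 then 0 else 1) ∧
        (∀ s : Fin m,
          (∑ i : Fin m, mon (i, s)) = if s ∈ Set.range IJ.2 then 0 else 1) := by
  rw [← permPoly_apply] at hq
  subst hq
  have hf : f ∈ rankRelations F m n := mem_rankRelations_of_eval_eq_zero hvan
  rw [rankRelations_eq_antisymmetrizerSpan, antisymmetrizerSpan,
    Submodule.mem_span_range_iff_exists_fun] at hf
  obtain ⟨a, rfl⟩ := hf
  obtain ⟨c, hc, hsum⟩ := AddSubmonoid.exists_mem_sum_mul_eq_sum_mul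
    (fun IJ => (restrictSupport F (complementaryExponents IJ.1 IJ.2)).toAddSubmonoid)
    (fun γ => (γ.2.trans γ.1.toEmbedding, γ.2))
    (fun γ => a γ • ∏ c ∈ (univ.map γ.2)ᶜ, X (γ.1 c, c))
    (fun γ => Submodule.smul_mem _ _ (prod_compl_X_mem_restrictSupport γ.1 γ.2))
    (fun IJ => ((genMatrix F m).submatrix IJ.1 IJ.2).det)
  refine ⟨c, ?_, fun IJ mon hmon => hc IJ hmon⟩
  rw [← hsum, map_sum]
  simp only [map_smul, permPoly_antisymmetrizer, smul_mul_assoc]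

/-- Multihomogeneous refinement of the SFT: a multilinear polynomial
`q = Σ_π f(π) Π_i x_{π(i),i}` vanishing on all rank ≤ n matrices can be written as
`Σ_{I,J} q_{I,J}·det(X_{I,J})` where each `q_{I,J}` has total degree 1 in each row
not in `I` and degree 0 in rows in `I`, and similarly for columns w.r.t. `J`. -/
theorem sft_multilinear_coefficients (F : Type*) [Field F] [IsAlgClosed F] [CharZero F]
    (m n : ℕ) (hm : n + 1 ≤ m) (f : Equiv.Perm (Fin m) → F)
    (q : MvPolynomial (Fin m × Fin m) F)
    (hq : q = ∑ π : Equiv.Perm (Fin m), MvPolynomial.C (f π) *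
      ∏ i : Fin m, MvPolynomial.X (π i, i))
    (hvan : ∀ M : Matrix (Fin m) (Fin m) F, M.rank ≤ n →
      MvPolynomial.eval (fun p : Fin m × Fin m => M p.1 p.2) q = 0) :
    ∃ c : (Fin (n + 1) ↪ Fin m) × (Fin (n + 1) ↪ Fin m) →
        MvPolynomial (Fin m × Fin m) F,
      q = ∑ IJ : (Fin (n + 1) ↪ Fin m) × (Fin (n + 1) ↪ Fin m),
            c IJ * Matrix.det ((genMatrix F m).submatrix IJ.1 IJ.2) ∧
      ∀ IJ, ∀ mon ∈ (c IJ).support,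
        (∀ r : Fin m,
          (∑ j : Fin m, mon (r, j)) = if r ∈ Set.range IJ.1 then 0 else 1) ∧
        (∀ s : Fin m,
          (∑ i : Fin m, mon (i, s)) = if s ∈ Set.range IJ.2 then 0 else 1) :=
  sft_multilinear_coefficients_general F m n f q hq hvan
end
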